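/- Let q, h, a : ℝ → ℝ³ satisfy the spacelike Frenet equations q' = k₁ h, h' = k₁ q + k₂ a, a' = k₂ h with k₁, k₂ nonvanishing and ⟨q,q⟩ = ⟨a,a⟩ = 1, ⟨h,h⟩ = -1, pairwise orthogonal. Suppose u is a constant vector with ⟨h,u⟩ = c_h a nonzero constant and ⟨u,u⟩ = η = ±1. Then the function f = k₁² / (k₁² + k₂²)^{3/2} · (k₂/k₁)' is constant. -/

import Mathlib

/-- Minkowski inner product on `ℝ³`: `⟨x,y⟩ = -x₁y₁ + x₂y₂ + x₃y₃`. -/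
noncomputable def mink (x y : Fin 3 → ℝ) : ℝ :=
  -(x 0 * y 0) + x 1 * y 1 + x 2 * y 2

/-- Lorentzian cross product `x × y = (x₂y₃ - x₃y₂, x₁y₃ - x₃y₁, x₂y₁ - x₁y₂)`. -/
noncomputable def lcross (x y : Fin 3 → ℝ) : Fin 3 → ℝ :=
  ![x 1 * y 2 - x 2 * y 1, x 0 * y 2 - x 2 * y 0, x 1 * y 0 - x 0 * y 1]

/-- Mixed product `det(u,v,w) = ⟨u × v, w⟩`. -/
noncomputable def ldet (u v w : Fin 3 → ℝ) : ℝ := mink (lcross u v) w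

private lemma mink_hasDerivAt (x : ℝ → Fin 3 → ℝ) (x' u : Fin 3 → ℝ) (s : ℝ)
    (hx : HasDerivAt x x' s) :
    HasDerivAt (fun t => mink (x t) u) (mink x' u) s := by
  have h0 := (hasDerivAt_pi.mp hx) 0
  have h1 := (hasDerivAt_pi.mp hx) 1
  have h2 := (hasDerivAt_pi.mp hx) 2
  exact
    (((h0.mul_const (u 0)).neg.add (h1.mul_const (u 1))).add (h2.mul_const (u 2)))

theorem stmt18 (q h a : ℝ → Fin 3 → ℝ) (k₁ k₂ : ℝ → ℝ)
    (hsq : ContDiff ℝ (⊤ : ℕ∞) q) (hsh : ContDiff ℝ (⊤ : ℕ∞) h) (hsa : ContDiff ℝ (⊤ : ℕ∞) a)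
    (hsk₁ : ContDiff ℝ (⊤ : ℕ∞) k₁) (hsk₂ : ContDiff ℝ (⊤ : ℕ∞) k₂)
    (hk₁ : ∀ s, k₁ s ≠ 0) (hk₂ : ∀ s, k₂ s ≠ 0)
    (hF1 : ∀ s, deriv q s = k₁ s • h s)
    (hF2 : ∀ s, deriv h s = k₁ s • q s + k₂ s • a s)
    (hF3 : ∀ s, deriv a s = k₂ s • h s)
    (hqq : ∀ s, mink (q s) (q s) = 1) (hhh : ∀ s, mink (h s) (h s) = -1)
    (haa : ∀ s, mink (a s) (a s) = 1)
    (hqh : ∀ s, mink (q s) (h s) = 0) (hqa : ∀ s, mink (q s) (a s) = 0)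
    (hha : ∀ s, mink (h s) (a s) = 0)
    (u : Fin 3 → ℝ) (c_h η : ℝ) (hch : c_h ≠ 0)
    (hhu : ∀ s, mink (h s) u = c_h)
    (huu : mink u u = η) (hη : η = 1 ∨ η = -1) :
    ∃ c, ∀ s, (k₁ s) ^ 2 / (Real.sqrt ((k₁ s) ^ 2 + (k₂ s) ^ 2)) ^ 3 *
      deriv (fun t => k₂ t / k₁ t) s = c := by
  classical
  set b₁ : ℝ → ℝ := fun s => mink (q s) u with hb₁def
  set b₂ : ℝ → ℝ := fun s => mink (a s) u with hb₂def
  -- derivatives of the frame fields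
  have hqd : ∀ s, HasDerivAt q (k₁ s • h s) s := by
    intro s
    have := ((hsq.differentiable (by simp)) s).hasDerivAt
    rwa [hF1 s] at this
  have hhd : ∀ s, HasDerivAt h (k₁ s • q s + k₂ s • a s) s := by
    intro s
    have := ((hsh.differentiable (by simp)) s).hasDerivAt
    rwa [hF2 s] at this
  have had : ∀ s, HasDerivAt a (k₂ s • h s) s := by
    intro s
    have := ((hsa.differentiable (by simp)) s).hasDerivAt
    rwa [hF3 s] at this
  -- derivatives of b₁, b₂
  have hb₁d : ∀ s, HasDerivAt b₁ (c_h * k₁ s) s := by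
    intro s
    have hd := mink_hasDerivAt q (k₁ s • h s) u s (hqd s)
    have e : mink (k₁ s • h s) u = c_h * k₁ s := by
      have hu := hhu s
      simp only [mink, Pi.smul_apply, smul_eq_mul] at hu ⊢
      linear_combination (k₁ s) * hu
    rwa [e] at hd
  have hb₂d : ∀ s, HasDerivAt b₂ (c_h * k₂ s) s := by
    intro s
    have hd := mink_hasDerivAt a (k₂ s • h s) u s (had s)
    have e : mink (k₂ s • h s) u = c_h * k₂ s := by
      have hu := hhu s
      simp only [mink, Pi.smul_apply, smul_eq_mul] at hu ⊢
      linear_combination (k₂ s) * hu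
    rwa [e] at hd
  -- the relation k₁ b₁ + k₂ b₂ = 0
  have hrel : ∀ s, k₁ s * b₁ s + k₂ s * b₂ s = 0 := by
    intro s
    have hd := mink_hasDerivAt h (k₁ s • q s + k₂ s • a s) u s (hhd s)
    have hconst : HasDerivAt (fun t => mink (h t) u) 0 s := by
      have e : (fun t => mink (h t) u) = fun _ => c_h := funext hhu
      rw [e]; exact hasDerivAt_const s c_h
    have huniq := hd.unique hconst
    simp only [mink, Pi.add_apply, Pi.smul_apply, smul_eq_mul] at huniq
    simp only [hb₁def, hb₂def, mink]
    linear_combination huniq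
  -- the conserved quantity C = b₁² + b₂²
  set C : ℝ := b₁ 0 * b₁ 0 + b₂ 0 * b₂ 0 with hCdef
  have hFd : ∀ t, HasDerivAt (fun x => b₁ x * b₁ x + b₂ x * b₂ x) 0 t := by
    intro t
    have hd := ((hb₁d t).mul (hb₁d t)).add ((hb₂d t).mul (hb₂d t))
    have e : c_h * k₁ t * b₁ t + b₁ t * (c_h * k₁ t) +
        (c_h * k₂ t * b₂ t + b₂ t * (c_h * k₂ t)) = 0 := by
      have := hrel t; linear_combination 2 * c_h * this
    rwa [e] at hd
  have hCconst : ∀ s, b₁ s * b₁ s + b₂ s * b₂ s = C := fun s =>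
    is_const_of_deriv_eq_zero (fun t => (hFd t).differentiableAt)
      (fun t => (hFd t).deriv) s 0
  have hCpos : 0 < C := by
    rcases lt_or_eq_of_le (by nlinarith [mul_self_nonneg (b₁ 0), mul_self_nonneg (b₂ 0)] :
        (0:ℝ) ≤ C) with hlt | heq
    · exact hlt
    · exfalso
      have hb₁0 : ∀ s, b₁ s = 0 := by
        intro s
        have := hCconst s
        nlinarith [mul_self_nonneg (b₁ s), mul_self_nonneg (b₂ s)]
      have hz : HasDerivAt b₁ 0 0 := by
        have e : b₁ = fun _ => (0:ℝ) := funext hb₁0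
        rw [e]; exact hasDerivAt_const 0 0
      have := (hb₁d 0).unique hz
      exact (mul_ne_zero hch (hk₁ 0)) this
  have hb₂ne : ∀ s, b₂ s ≠ 0 := by
    intro s hzero
    have h1 := hrel s
    rw [hzero] at h1
    have hb1 : b₁ s = 0 := by
      have := mul_eq_zero.mp (by linarith : k₁ s * b₁ s = 0)
      tauto
    have := hCconst s
    rw [hb1, hzero] at this
    simp at this
    linarith [hCpos, this]
  -- derivative of m = k₂/k₁
  have hmd : ∀ s, HasDerivAt (fun t => k₂ t / k₁ t)
      ((deriv k₂ s * k₁ s - k₂ s * deriv k₁ s) / (k₁ s) ^ 2) s := by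
    intro s
    exact ((hsk₂.differentiable (by simp) s).hasDerivAt).div
      ((hsk₁.differentiable (by simp) s).hasDerivAt) (hk₁ s)
  set D : ℝ → ℝ := fun s => deriv (fun t => k₂ t / k₁ t) s with hDdef
  have hDeq : ∀ s, D s = (deriv k₂ s * k₁ s - k₂ s * deriv k₁ s) / (k₁ s) ^ 2 :=
    fun s => (hmd s).deriv
  -- key identity : D s * b₂ s * k₁ s = -(c_h * (k₁ s ^ 2 + k₂ s ^ 2))
  have hkey : ∀ s, D s * b₂ s * k₁ s = -(c_h * ((k₁ s) ^ 2 + (k₂ s) ^ 2)) := by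
    intro s
    -- b₁ = -(m * b₂) as functions
    have hbid : ∀ t, b₁ t = -((k₂ t / k₁ t) * b₂ t) := by
      intro t
      have hkt := hk₁ t
      field_simp
      linear_combination hrel t
    have hmds : HasDerivAt (fun t => k₂ t / k₁ t) (D s) s := by
      rw [hDeq s]; exact hmd s
    have hneg : HasDerivAt (fun t => -((k₂ t / k₁ t) * b₂ t))
        (-(D s * b₂ s + (k₂ s / k₁ s) * (c_h * k₂ s))) s :=
      (hmds.mul (hb₂d s)).neg
    have hb1' : HasDerivAt (fun t => -((k₂ t / k₁ t) * b₂ t)) (c_h * k₁ s) s := by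
      have e : (fun t => -((k₂ t / k₁ t) * b₂ t)) = b₁ := by
        funext t; rw [hbid t]
      rw [e]; exact hb₁d s
    have huniq := hneg.unique hb1'
    have hk := hk₁ s
    field_simp at huniq
    nlinarith [huniq, sq_nonneg (k₁ s)]
  -- g is the candidate constant function
  set K : ℝ → ℝ := fun s => Real.sqrt ((k₁ s) ^ 2 + (k₂ s) ^ 2) with hKdef
  have hKpos : ∀ s, 0 < K s := by
    intro s
    apply Real.sqrt_pos.mpr
    have h1 : 0 < (k₁ s) ^ 2 := sq_abs (k₁ s) ▸ pow_pos (abs_pos.mpr (hk₁ s)) 2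
    nlinarith [sq_nonneg (k₂ s)]
  have hKsq : ∀ s, (K s) ^ 2 = (k₁ s) ^ 2 + (k₂ s) ^ 2 := by
    intro s
    apply Real.sq_sqrt
    nlinarith [sq_nonneg (k₁ s), sq_nonneg (k₂ s)]
  set g : ℝ → ℝ := fun s => -c_h * k₁ s / (b₂ s * K s) with hgdef
  -- f = g
  have hfg : ∀ s, (k₁ s) ^ 2 / (K s) ^ 3 * D s = g s := by
    intro s
    have hKne := (hKpos s).ne'
    have hb₂n := hb₂ne s
    have hk := hk₁ s
    have hkk := hkey s
    have hK2 := hKsq s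
    simp only [hgdef]
    rw [div_mul_eq_mul_div, div_eq_div_iff (pow_ne_zero 3 hKne) (mul_ne_zero hb₂n hKne)]
    linear_combination (k₁ s * K s) * hkk + (c_h * k₁ s * K s) * hK2
  -- g² is the constant c_h²/C
  have hgsq : ∀ s, (g s) ^ 2 * C = c_h ^ 2 := by
    intro s
    have h1 := hrel s
    have h2 := hCconst s
    have hK2 := hKsq s
    have hKne := (hKpos s).ne'
    have hb₂n := hb₂ne s
    have hk := hk₁ s
    simp only [hgdef]
    rw [div_pow, div_mul_eq_mul_div, div_eq_iff (pow_ne_zero 2 (mul_ne_zero hb₂n hKne))]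
    linear_combination (-(c_h ^ 2) * (k₁ s) ^ 2) * h2 - c_h ^ 2 * (b₂ s) ^ 2 * hK2 +
      c_h ^ 2 * (k₁ s * b₁ s - k₂ s * b₂ s) * h1
  have hgne : ∀ s, g s ≠ 0 := by
    intro s hzero
    have := hgsq s
    rw [hzero] at this
    simp at this
    exact hch (pow_eq_zero_iff (n := 2) (by norm_num) |>.mp this.symm)
  -- g is continuous
  have hk₁c : Continuous k₁ := hsk₁.continuous
  have hk₂c : Continuous k₂ := hsk₂.continuous
  have hgcont : Continuous g := by
    have hb₂cont : Continuous b₂ := by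
      have h0 : Continuous fun s => a s 0 := (continuous_apply 0).comp hsa.continuous
      have h1 : Continuous fun s => a s 1 := (continuous_apply 1).comp hsa.continuous
      have h2 : Continuous fun s => a s 2 := (continuous_apply 2).comp hsa.continuous
      simp only [hb₂def, mink]
      fun_prop
    have hKcont : Continuous K := by
      simp only [hKdef]
      exact Real.continuous_sqrt.comp (by fun_prop)
    apply Continuous.div (by fun_prop) (by fun_prop)
    intro s
    exact mul_ne_zero (hb₂ne s) (hKpos s).ne'
  -- g is constant
  have hgc : ∀ s, g s = g 0 := by
    intro s
    by_contra hne
    have hopp : g s = -(g 0) := by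
      have e1 := hgsq s
      have e2 := hgsq 0
      have : (g s - g 0) * (g s + g 0) = 0 := by nlinarith
      rcases mul_eq_zero.mp this with h' | h'
      · exact absurd (by linarith) hne
      · linarith
    have h0 : (0:ℝ) ∈ Set.uIcc (g 0) (g s) := by
      rw [hopp]
      rcases le_total (g 0) 0 with h' | h'
      · exact Set.mem_uIcc.mpr (Or.inl ⟨h', by linarith⟩)
      · exact Set.mem_uIcc.mpr (Or.inr ⟨by linarith, h'⟩)
    have hsub := intermediate_value_uIcc (a := (0:ℝ)) (b := s) (f := g)
      (hgcont.continuousOn)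
    obtain ⟨x, _, hx⟩ := hsub h0
    exact hgne x hx
  exact ⟨g 0, fun s => by rw [← hgc s]; exact hfg s⟩
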